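/- arXiv:2508.14518 — 2 statements merged into one kernel-verified Lean document; each statement's English description precedes it below -/
import Mathlib

section
/- Let 𝒢(t) = μ̄^∞ + Σ_{α=1}^M μ̄_α exp(−t/τ̄_α) be a relaxation function and 𝒥 a creep function, both continuous on [0,∞), 𝒥 continuously differentiable, satisfying the interconversion relation ∫₀ᵗ 𝒢(s) 𝒥(t−s) ds = t for all t ≥ 0. Let T^∞ : [0,∞) → Sym(3) be C¹ with T^∞(0) = 0, and define E(s) = ∫₀ˢ 𝒥(s−τ) dT^∞/dτ (τ) dτ. Then T(t) := ∫₀ᵗ 𝒢(t−s) dE/ds (s) ds = T^∞(t) for all t ≥ 0. -/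
open Set Filter Matrix intervalIntegral

open MeasureTheory

attribute [local instance] Matrix.frobeniusNormedAddCommGroup Matrix.frobeniusNormedSpace

/-- Fubini for iterated integrals over a triangle, for continuous integrands. -/
lemma tri_swap {X : Type*} [NormedAddCommGroup X] [NormedSpace ℝ X] [CompleteSpace X]
    (f : ℝ → ℝ → X) (hf : Continuous fun p : ℝ × ℝ => f p.1 p.2) {t : ℝ} (ht : 0 ≤ t) :
    (∫ s in (0:ℝ)..t, ∫ r in (0:ℝ)..s, f r s) = ∫ r in (0:ℝ)..t, ∫ s in r..t, f r s := by
  have hswapc : Continuous fun p : ℝ × ℝ => f p.2 p.1 := hf.comp continuous_swap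
  set F : ℝ → ℝ → X := fun s r => (Iic s).indicator (fun r' => f r' s) r with hF
  have hInt : Integrable (Function.uncurry F)
      ((volume.restrict (Ioc (0:ℝ) t)).prod (volume.restrict (Ioc (0:ℝ) t))) := by
    have hSmeas : MeasurableSet {p : ℝ × ℝ | p.2 ≤ p.1} :=
      measurableSet_le measurable_snd measurable_fst
    have hFeq : Function.uncurry F = ({p : ℝ × ℝ | p.2 ≤ p.1}).indicator
        (fun p : ℝ × ℝ => f p.2 p.1) := by
      funext p
      by_cases h : p.2 ≤ p.1 <;>
        simp [hF, Function.uncurry, Set.indicator_apply, h]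
    obtain ⟨C, hC⟩ := (isCompact_Icc.prod isCompact_Icc :
        IsCompact (Icc (0:ℝ) t ×ˢ Icc (0:ℝ) t)).exists_bound_of_continuousOn
      hswapc.continuousOn
    haveI : IsFiniteMeasure (volume.restrict (Ioc (0:ℝ) t)) := by
      constructor
      rw [Measure.restrict_apply_univ]
      exact measure_Ioc_lt_top
    refine Integrable.mono' (integrable_const C)
      (by rw [hFeq]; exact hswapc.aestronglyMeasurable.indicator hSmeas) ?_
    rw [Measure.prod_restrict]
    filter_upwards [MeasureTheory.ae_restrict_mem (measurableSet_Ioc.prod measurableSet_Ioc)]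
      with p hp
    have hp1 : p.1 ∈ Icc (0:ℝ) t := Ioc_subset_Icc_self hp.1
    have hp2 : p.2 ∈ Icc (0:ℝ) t := Ioc_subset_Icc_self hp.2
    calc ‖Function.uncurry F p‖
        ≤ ‖f p.2 p.1‖ := by rw [hFeq]; exact norm_indicator_le_norm_self _ _
      _ ≤ C := hC p ⟨hp1, hp2⟩
  have hL : EqOn (fun s => ∫ r in (0:ℝ)..s, f r s) (fun s => ∫ r in Ioc (0:ℝ) t, F s r)
      (Ioc (0:ℝ) t) := by
    intro s hs
    simp only [hF]
    rw [MeasureTheory.setIntegral_indicator measurableSet_Iic,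
      Set.Ioc_inter_Iic, min_eq_right hs.2, intervalIntegral.integral_of_le hs.1.le]
  have hR : EqOn (fun r => ∫ s in Ioc (0:ℝ) t, F s r) (fun r => ∫ s in r..t, f r s)
      (Ioc (0:ℝ) t) := by
    intro r hr
    have h1 : (fun s => F s r) = fun s => (Ici r).indicator (fun s' => f r s') s := by
      funext s
      by_cases h : r ≤ s <;> simp [hF, Set.indicator_apply, h]
    simp only [h1]
    rw [MeasureTheory.setIntegral_indicator measurableSet_Ici]
    have h2 : Ioc (0:ℝ) t ∩ Ici r = Icc r t := by
      ext x
      simp only [mem_inter_iff, mem_Ioc, mem_Ici, mem_Icc]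
      constructor
      · rintro ⟨⟨_, h2⟩, h3⟩; exact ⟨h3, h2⟩
      · rintro ⟨h1', h2⟩; exact ⟨⟨lt_of_lt_of_le hr.1 h1', h2⟩, h1'⟩
    rw [h2, MeasureTheory.integral_Icc_eq_integral_Ioc,
      ← intervalIntegral.integral_of_le hr.2]
  rw [intervalIntegral.integral_of_le ht,
    MeasureTheory.setIntegral_congr_fun measurableSet_Ioc hL,
    MeasureTheory.integral_integral_swap hInt,
    MeasureTheory.setIntegral_congr_fun measurableSet_Ioc hR,
    ← intervalIntegral.integral_of_le ht]

/-- Fundamental theorem of calculus on `[0, b]` for functions differentiable within `Ici 0`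
with continuous derivative. -/
lemma ftc_Ici {X : Type*} [NormedAddCommGroup X] [NormedSpace ℝ X] [CompleteSpace X]
    (f f' : ℝ → X) (hf : ∀ x ∈ Ici (0:ℝ), HasDerivWithinAt f (f' x) (Ici 0) x)
    (hc : ContinuousOn f' (Ici 0)) {b : ℝ} (hb : 0 ≤ b) :
    ∫ x in (0:ℝ)..b, f' x = f b - f 0 := by
  have hIcc : Icc (0:ℝ) b ⊆ Ici 0 := Icc_subset_Ici_self
  refine intervalIntegral.integral_eq_sub_of_hasDeriv_right_of_le hb
    (fun x hx => ((hf x (hIcc hx)).continuousWithinAt).mono hIcc)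
    (fun x hx => ((hf x hx.1.le).hasDerivAt (Ici_mem_nhds hx.1)).hasDerivWithinAt) ?_
  exact (hc.mono (by rw [uIcc_of_le hb]; exact hIcc)).intervalIntegrable

theorem relaxation_creep_interconversion_recovers_stress
    (Mn : ℕ) (μbarInf : ℝ) (μbar τbar : Fin Mn → ℝ)
    (hμbarInf : 0 < μbarInf) (hμbar : ∀ α, 0 < μbar α) (hτbar : ∀ α, 0 < τbar α)
    (G : ℝ → ℝ)
    (hG : ∀ t, G t = μbarInf + ∑ α, μbar α * Real.exp (-t / τbar α))
    (J J' : ℝ → ℝ)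
    (hJcont : ContinuousOn J (Set.Ici 0))
    (hJ' : ∀ t ∈ Set.Ici (0 : ℝ), HasDerivWithinAt J (J' t) (Set.Ici 0) t)
    (hJ'cont : ContinuousOn J' (Set.Ici 0))
    (hinter : ∀ t ∈ Set.Ici (0 : ℝ), ∫ s in (0 : ℝ)..t, G s * J (t - s) = t)
    (Tinf T' : ℝ → Matrix (Fin 3) (Fin 3) ℝ)
    (hTsym : ∀ t, (Tinf t).IsSymm)
    (hT' : ∀ t ∈ Set.Ici (0 : ℝ), HasDerivWithinAt Tinf (T' t) (Set.Ici 0) t)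
    (hT'cont : ContinuousOn T' (Set.Ici 0))
    (hT0 : Tinf 0 = 0)
    (E E' : ℝ → Matrix (Fin 3) (Fin 3) ℝ)
    (hE : ∀ s, E s = ∫ u in (0 : ℝ)..s, J (s - u) • T' u)
    (hE' : ∀ s ∈ Set.Ici (0 : ℝ), HasDerivWithinAt E (E' s) (Set.Ici 0) s)
    (hE'cont : ContinuousOn E' (Set.Ici 0)) :
    ∀ t ∈ Set.Ici (0 : ℝ),
      (∫ s in (0 : ℝ)..t, G (t - s) • E' s) = Tinf t := by
  intro t ht
  rw [Set.mem_Ici] at ht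
  -- continuous extensions to all of ℝ
  have hmax : ∀ y : ℝ, 0 ≤ y → max y 0 = y := fun y hy => max_eq_left hy
  have hmaxmem : ∀ y : ℝ, max y 0 ∈ Ici (0:ℝ) := fun y => le_max_right y 0
  set Jt : ℝ → ℝ := fun y => J (max y 0) with hJt
  set T'e : ℝ → Matrix (Fin 3) (Fin 3) ℝ := fun u => T' (max u 0) with hT'e
  set E'e : ℝ → Matrix (Fin 3) (Fin 3) ℝ := fun u => E' (max u 0) with hE'e
  have hmaxc : Continuous fun y : ℝ => max y 0 := continuous_id.max continuous_const
  have hJtc : Continuous Jt := hJcont.comp_continuous hmaxc hmaxmem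
  have hT'ec : Continuous T'e := hT'cont.comp_continuous hmaxc hmaxmem
  have hE'ec : Continuous E'e := hE'cont.comp_continuous hmaxc hmaxmem
  -- the derivative of G
  set G' : ℝ → ℝ := fun r => ∑ α, μbar α * (Real.exp (-r / τbar α) * (-1 / τbar α)) with hG'
  have hGd : ∀ r : ℝ, HasDerivAt G (G' r) r := by
    intro r
    have h1 : ∀ α : Fin Mn, HasDerivAt (fun t : ℝ => μbar α * Real.exp (-t / τbar α))
        (μbar α * (Real.exp (-r / τbar α) * (-1 / τbar α))) r := fun α =>
      (((hasDerivAt_id r).neg.div_const (τbar α)).exp).const_mul (μbar α)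
    have h2 : HasDerivAt (fun t => μbarInf + ∑ α, μbar α * Real.exp (-t / τbar α)) (G' r) r := by
      simpa [hG'] using (HasDerivAt.sum (fun α _ => h1 α)).const_add μbarInf
    exact h2.congr_of_eventuallyEq (Filter.Eventually.of_forall hG)
  have hG'c : Continuous G' := continuous_finset_sum _ fun α _ =>
    continuous_const.mul ((Real.continuous_exp.comp (continuous_id.neg.div_const _)).mul
      continuous_const)
  have hGint : ∀ y : ℝ, ∫ r in (0:ℝ)..y, G' r = G y - G 0 := fun y =>
    intervalIntegral.integral_eq_sub_of_hasDerivAt (fun x _ => hGd x)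
      (hG'c.intervalIntegrable _ _)
  have hGval : ∀ y : ℝ, G y = G 0 + ∫ r in (0:ℝ)..y, G' r := by
    intro y; rw [hGint y]; ring
  -- the scalar convolution kernel
  set K : ℝ → ℝ := fun y => ∫ w in (0:ℝ)..y, Jt w with hK
  set ψ : ℝ → ℝ := fun x => ∫ w in (0:ℝ)..x, G' (x - w) * Jt w with hψ
  set H : ℝ → ℝ := fun x => G 0 * Jt x + ψ x with hH
  have hψeq : ∀ x, ψ x = ∑ α, (μbar α * (-1 / τbar α) * Real.exp (-x / τbar α)) *
      ∫ w in (0:ℝ)..x, Real.exp (w / τbar α) * Jt w := by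
    intro x
    have h1 : (fun w => G' (x - w) * Jt w) = fun w =>
        ∑ α, (μbar α * (-1 / τbar α) * Real.exp (-x / τbar α)) *
          (Real.exp (w / τbar α) * Jt w) := by
      funext w
      rw [hG', Finset.sum_mul]
      refine Finset.sum_congr rfl fun α _ => ?_
      have hτ : τbar α ≠ 0 := (hτbar α).ne'
      have hexp : Real.exp (-(x - w) / τbar α)
          = Real.exp (-x / τbar α) * Real.exp (w / τbar α) := by
        rw [← Real.exp_add]; congr 1; field_simp; ring
      rw [hexp]; ring
    rw [hψ]
    simp only
    have hintgr : ∀ α : Fin Mn,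
        IntervalIntegrable (fun w => (μbar α * (-1 / τbar α) * Real.exp (-x / τbar α)) *
          (Real.exp (w / τbar α) * Jt w)) volume 0 x := by
      intro α
      have hc : Continuous fun w : ℝ => (μbar α * (-1 / τbar α) * Real.exp (-x / τbar α)) *
          (Real.exp (w / τbar α) * Jt w) :=
        continuous_const.mul ((Real.continuous_exp.comp (continuous_id.div_const _)).mul hJtc)
      exact hc.intervalIntegrable _ _
    rw [h1, intervalIntegral.integral_finset_sum (fun α _ => hintgr α)]
    exact Finset.sum_congr rfl fun α _ => intervalIntegral.integral_const_mul _ _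
  have hψc : Continuous ψ := by
    have h1 : Continuous fun x => ∑ α, (μbar α * (-1 / τbar α) * Real.exp (-x / τbar α)) *
        ∫ w in (0:ℝ)..x, Real.exp (w / τbar α) * Jt w :=
      continuous_finset_sum _ fun α _ =>
        (continuous_const.mul (Real.continuous_exp.comp (continuous_id.neg.div_const _))).mul
          (intervalIntegral.continuous_primitive (fun a b =>
            ((Real.continuous_exp.comp (continuous_id.div_const _)).mul
              hJtc).intervalIntegrable a b) 0)
    exact h1.congr fun x => (hψeq x).symm
  have hHc : Continuous H := (continuous_const.mul hJtc).add hψc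
  -- interconversion with the extended creep function
  have hinterJt : ∀ x : ℝ, 0 ≤ x → ∫ s in (0:ℝ)..x, G s * Jt (x - s) = x := by
    intro x hx
    calc (∫ s in (0:ℝ)..x, G s * Jt (x - s)) = ∫ s in (0:ℝ)..x, G s * J (x - s) := by
          refine intervalIntegral.integral_congr fun s hs => ?_
          rw [uIcc_of_le hx] at hs
          have h1 : (0:ℝ) ≤ x - s := by linarith [hs.2]
          simp [hJt, hmax _ h1]
      _ = x := hinter x hx
  -- the primitive of H is the identity on `[0, ∞)`
  have hGc : Continuous G := by
    rw [funext hG]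
    exact continuous_const.add (continuous_finset_sum _ fun α _ =>
      continuous_const.mul (Real.continuous_exp.comp (continuous_id.neg.div_const _)))
  have hintH : ∀ x : ℝ, 0 ≤ x → ∫ y in (0:ℝ)..x, H y = x := by
    intro x hx
    have hsplit : ∫ y in (0:ℝ)..x, H y
        = (∫ y in (0:ℝ)..x, G 0 * Jt y) + ∫ y in (0:ℝ)..x, ψ y := by
      simp only [hH]
      exact intervalIntegral.integral_add
        ((continuous_const.mul hJtc).intervalIntegrable _ _) (hψc.intervalIntegrable _ _)
    have htri : ∫ y in (0:ℝ)..x, ψ y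
        = ∫ w in (0:ℝ)..x, ∫ y in w..x, G' (y - w) * Jt w := by
      simp only [hψ]
      exact tri_swap (fun w y => G' (y - w) * Jt w)
        ((hG'c.comp (continuous_snd.sub continuous_fst)).mul (hJtc.comp continuous_fst)) hx
    have hinner : ∀ w, (∫ y in w..x, G' (y - w) * Jt w) = (G (x - w) - G 0) * Jt w := by
      intro w
      rw [intervalIntegral.integral_mul_const]
      have h1 := intervalIntegral.integral_comp_sub_right (a := w) (b := x) G' w
      simp only [sub_self] at h1
      rw [h1, hGint]
    have hrefl : (∫ w in (0:ℝ)..x, G (x - w) * Jt w) = x := by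
      have h1 : (fun w => G (x - w) * Jt w)
          = fun w => (fun v => G v * Jt (x - v)) (x - w) := by
        funext w
        simp only [sub_sub_cancel]
      rw [h1, intervalIntegral.integral_comp_sub_left (fun v => G v * Jt (x - v)) x]
      simp only [sub_self, sub_zero]
      exact hinterJt x hx
    have hψint : ∫ y in (0:ℝ)..x, ψ y = x - G 0 * K x := by
      rw [htri]
      have h2 : (∫ w in (0:ℝ)..x, ∫ y in w..x, G' (y - w) * Jt w)
          = ∫ w in (0:ℝ)..x, (G (x - w) * Jt w - G 0 * Jt w) := by
        refine intervalIntegral.integral_congr fun w _ => ?_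
        rw [hinner w]; ring
      have c1 : Continuous fun w : ℝ => G (x - w) * Jt w :=
        (hGc.comp (continuous_const.sub continuous_id)).mul hJtc
      have c2 : Continuous fun w : ℝ => G 0 * Jt w := continuous_const.mul hJtc
      rw [h2, intervalIntegral.integral_sub (c1.intervalIntegrable _ _)
        (c2.intervalIntegrable _ _), hrefl, intervalIntegral.integral_const_mul]
    rw [hsplit, intervalIntegral.integral_const_mul, hψint]
    simp only [hK]
    ring
  -- hence H = 1 on [0, ∞)
  have hHone : ∀ x : ℝ, 0 ≤ x → H x = 1 := by
    intro x hx
    have h1 : HasDerivWithinAt (fun u => ∫ y in (0:ℝ)..u, H y) (H x) (Ici 0) x :=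
      (intervalIntegral.integral_hasDerivAt_right (hHc.intervalIntegrable _ _)
        (hHc.stronglyMeasurableAtFilter _ _) hHc.continuousAt).hasDerivWithinAt
    have h2 : HasDerivWithinAt (fun u => ∫ y in (0:ℝ)..u, H y) 1 (Ici 0) x := by
      have hid : HasDerivWithinAt (fun u : ℝ => u) 1 (Ici 0) x :=
        (hasDerivAt_id x).hasDerivWithinAt
      exact hid.congr (fun y hy => hintH y hy) (hintH x hx)
    rw [← h1.derivWithin (uniqueDiffOn_Ici (0:ℝ) x hx),
      h2.derivWithin (uniqueDiffOn_Ici (0:ℝ) x hx)]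
  -- basic FTC facts
  have hE0 : E 0 = 0 := by rw [hE]; simp
  have hIE : ∀ y : ℝ, 0 ≤ y → ∫ u in (0:ℝ)..y, E'e u = E y := by
    intro y hy
    have h1 : (∫ u in (0:ℝ)..y, E'e u) = ∫ u in (0:ℝ)..y, E' u :=
      intervalIntegral.integral_congr fun u hu => by
        rw [uIcc_of_le hy] at hu
        simp [hE'e, hmax _ hu.1]
    rw [h1, ftc_Ici E E' hE' hE'cont hy, hE0, sub_zero]
  have hITinf : (∫ u in (0:ℝ)..t, T'e u) = Tinf t := by
    have h1 : (∫ u in (0:ℝ)..t, T'e u) = ∫ u in (0:ℝ)..t, T' u :=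
      intervalIntegral.integral_congr fun u hu => by
        rw [uIcc_of_le ht] at hu
        simp [hT'e, hmax _ hu.1]
    rw [h1, ftc_Ici Tinf T' hT' hT'cont ht, hT0, sub_zero]
  have hEext : ∀ y : ℝ, 0 ≤ y → E y = ∫ u in (0:ℝ)..y, Jt (y - u) • T'e u := by
    intro y hy
    rw [hE y]
    refine intervalIntegral.integral_congr fun u hu => ?_
    rw [uIcc_of_le hy] at hu
    have h1 : (0:ℝ) ≤ y - u := by linarith [hu.2]
    simp [hJt, hT'e, hmax _ h1, hmax _ hu.1]
  -- Step A : integrate the relaxation function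
  have stepA : (∫ s in (0:ℝ)..t, G (t - s) • E' s)
      = G 0 • E t + ∫ r in (0:ℝ)..t, G' r • E (t - r) := by
    have cprim : Continuous fun s : ℝ => ∫ r in (0:ℝ)..s, G' r :=
      intervalIntegral.continuous_primitive (fun a b => hG'c.intervalIntegrable a b) 0
    calc (∫ s in (0:ℝ)..t, G (t - s) • E' s)
        = ∫ s in (0:ℝ)..t, (G 0 • E'e s + (∫ r in (0:ℝ)..(t - s), G' r) • E'e s) := by
          refine intervalIntegral.integral_congr fun s hs => ?_
          rw [uIcc_of_le ht] at hs
          rw [show E' s = E'e s by simp [hE'e, hmax _ hs.1], hGval (t - s), add_smul]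
      _ = (∫ s in (0:ℝ)..t, G 0 • E'e s)
          + ∫ s in (0:ℝ)..t, (∫ r in (0:ℝ)..(t - s), G' r) • E'e s :=
          intervalIntegral.integral_add
            ((hE'ec.const_smul (G 0)).intervalIntegrable _ _)
            (((cprim.comp (continuous_const.sub continuous_id)).smul
              hE'ec).intervalIntegrable _ _)
      _ = G 0 • E t + ∫ s in (0:ℝ)..t, ∫ r in (0:ℝ)..(t - s), G' r • E'e s := by
          rw [intervalIntegral.integral_smul, hIE t ht]
          congr 1
          exact intervalIntegral.integral_congr fun s _ =>
            (intervalIntegral.integral_smul_const _ _).symm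
      _ = G 0 • E t + ∫ s in (0:ℝ)..t, ∫ r in (0:ℝ)..s, G' r • E'e (t - s) := by
          congr 1
          have h1 := intervalIntegral.integral_comp_sub_left (a := (0:ℝ)) (b := t)
            (fun s => ∫ r in (0:ℝ)..(t - s), G' r • E'e s) t
          simp only [sub_self, sub_zero, sub_sub_cancel] at h1
          exact h1.symm
      _ = G 0 • E t + ∫ r in (0:ℝ)..t, ∫ s in r..t, G' r • E'e (t - s) := by
          congr 1
          exact tri_swap (fun r s => G' r • E'e (t - s))
            ((hG'c.comp continuous_fst).smul
              (hE'ec.comp (continuous_const.sub continuous_snd))) ht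
      _ = G 0 • E t + ∫ r in (0:ℝ)..t, G' r • E (t - r) := by
          congr 1
          refine intervalIntegral.integral_congr fun r hr => ?_
          rw [uIcc_of_le ht] at hr
          rw [intervalIntegral.integral_smul]
          have h2 := intervalIntegral.integral_comp_sub_left (a := r) (b := t) E'e t
          simp only [sub_self] at h2
          rw [h2, hIE (t - r) (by linarith [hr.2])]
  -- Step B : insert the creep representation of the strain
  have hB1 : G 0 • E t = ∫ u in (0:ℝ)..t, (G 0 * Jt (t - u)) • T'e u := by
    rw [hEext t ht, ← intervalIntegral.integral_smul]
    simp only [smul_smul]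
  have hB2 : (∫ r in (0:ℝ)..t, G' r • E (t - r))
      = ∫ u in (0:ℝ)..t, ψ (t - u) • T'e u := by
    calc (∫ r in (0:ℝ)..t, G' r • E (t - r))
        = ∫ r in (0:ℝ)..t, ∫ u in (0:ℝ)..(t - r), (G' r * Jt (t - r - u)) • T'e u := by
          refine intervalIntegral.integral_congr fun r hr => ?_
          rw [uIcc_of_le ht] at hr
          rw [hEext (t - r) (by linarith [hr.2]), ← intervalIntegral.integral_smul]
          simp only [smul_smul]
      _ = ∫ r in (0:ℝ)..t, ∫ u in (0:ℝ)..r, (G' (t - r) * Jt (r - u)) • T'e u := by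
          have h1 := intervalIntegral.integral_comp_sub_left (a := (0:ℝ)) (b := t)
            (fun r => ∫ u in (0:ℝ)..(t - r), (G' r * Jt (t - r - u)) • T'e u) t
          simp only [sub_self, sub_zero, sub_sub_cancel] at h1
          exact h1.symm
      _ = ∫ u in (0:ℝ)..t, ∫ r in u..t, (G' (t - r) * Jt (r - u)) • T'e u :=
          tri_swap (fun u r => (G' (t - r) * Jt (r - u)) • T'e u)
            (((hG'c.comp (continuous_const.sub continuous_snd)).mul
              (hJtc.comp (continuous_snd.sub continuous_fst))).smul
              (hT'ec.comp continuous_fst)) ht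
      _ = ∫ u in (0:ℝ)..t, ψ (t - u) • T'e u := by
          refine intervalIntegral.integral_congr fun u hu => ?_
          rw [uIcc_of_le ht] at hu
          have h2 : (∫ r in u..t, G' (t - r) * Jt (r - u)) = ψ (t - u) := by
            have h3 := intervalIntegral.integral_comp_sub_right (a := u) (b := t)
              (fun w => G' (t - u - w) * Jt w) u
            simp only [sub_self, sub_sub_sub_cancel_right] at h3
            rw [hψ]
            simp only
            rw [← h3]
          rw [← h2, intervalIntegral.integral_smul_const]
  -- Conclusion
  have c1 : Continuous fun u : ℝ => (G 0 * Jt (t - u)) • T'e u :=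
    (continuous_const.mul (hJtc.comp (continuous_const.sub continuous_id))).smul hT'ec
  have c2 : Continuous fun u : ℝ => ψ (t - u) • T'e u :=
    (hψc.comp (continuous_const.sub continuous_id)).smul hT'ec
  rw [stepA, hB1, hB2, ← intervalIntegral.integral_add
    (c1.intervalIntegrable _ _) (c2.intervalIntegrable _ _)]
  rw [← hITinf]
  refine intervalIntegral.integral_congr fun u hu => ?_
  rw [uIcc_of_le ht] at hu
  rw [← add_smul]
  have h1 : G 0 * Jt (t - u) + ψ (t - u) = H (t - u) := by simp only [hH]
  rw [h1, hHone (t - u) (by linarith [hu.2]), one_smul]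
end

section
/- Let V be a finite-dimensional real vector space, K^e : V → V linear, K^v_α : V → V linear for α = 1,…,M, Δt, η_α > 0. Suppose there exist linear maps N_α, M̂ : V → V with (Id + (Δt/η_α) K^v_α) ∘ N_α = Id for each α and (Id + K^e ∘ Σ_α (Δt/η_α) N_α) ∘ M̂ = Id. Given R₁,…,R_M ∈ V, define ΔE_α := −N_α(R_α) + (Δt/η_α) N_α(M̂(K^e(Σ_β N_β(R_β)))). Then for every γ ∈ {1,…,M}: (Δt/η_γ) K^e(Σ_α ΔE_α) + (Id + (Δt/η_γ) K^v_γ)(ΔE_γ) = −R_γ. -/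
/-!
Write `c α = Δt / η α`, `S = ∑ β, N β (R β)` and `u = M̂ (Kᵉ S)`. Since `M̂` is a right inverse of
`Id + Kᵉ ∘ ∑ α, c α • N α`, the coupling term collapses: `Kᵉ (∑ α, ΔE α) = -u`, while each
`N α` is a right inverse of the diagonal block `A α = Id + c α • Kᵛ α`, so
`A γ (ΔE γ) = -R γ + c γ • u`. Adding `c γ • Kᵉ (∑ α, ΔE α) = -(c γ • u)` gives `-R γ`.
-/

namespace LinearMap

variable {R V ι : Type*} [CommRing R] [AddCommGroup V] [Module R V] [Fintype ι]

theorem apply_sum_smul_apply_rightInverse_eq_sub (K Mhat : V →ₗ[R] V) (N : ι → V →ₗ[R] V)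
    (c : ι → R) (hM : (id + K ∘ₗ ∑ i, c i • N i) ∘ₗ Mhat = id) (v : V) :
    K (∑ i, c i • N i (Mhat v)) = v - Mhat v := by
  have hv : Mhat v + K (∑ i, c i • N i (Mhat v)) = v := by
    simpa only [comp_apply, add_apply, id_apply, sum_apply, smul_apply] using congr($hM v)
  exact eq_sub_of_add_eq' hv

theorem diag_add_rankOne_block_solution (K Mhat : V →ₗ[R] V) (A N : ι → V →ₗ[R] V)
    (c : ι → R) (hN : ∀ i, A i ∘ₗ N i = id) (hM : (id + K ∘ₗ ∑ i, c i • N i) ∘ₗ Mhat = id)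
    (r x : ι → V) (hx : ∀ i, x i = -N i (r i) + c i • N i (Mhat (K (∑ j, N j (r j)))))
    (i : ι) :
    c i • K (∑ j, x j) + A i (x i) = -r i := by
  have hschur := apply_sum_smul_apply_rightInverse_eq_sub K Mhat N c hM (K (∑ j, N j (r j)))
  set u := Mhat (K (∑ j, N j (r j)))
  have hcoupling : K (∑ j, x j) = -u := by
    simp only [hx, Finset.sum_add_distrib, Finset.sum_neg_distrib, map_add, map_neg, hschur]
    abel
  have hdiag : A i (x i) = -r i + c i • u := by
    have hAN : ∀ v, A i (N i v) = v := fun v => congr($(hN i) v)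
    rw [hx, map_add, map_neg, map_smul, hAN, hAN]
  rw [hcoupling, hdiag, smul_neg]
  abel

end LinearMap

theorem gkv_newton_system_closed_form_solution_general
    {V : Type*} [AddCommGroup V] [Module ℝ V]
    (M : ℕ) (Δt : ℝ)
    (η : Fin M → ℝ)
    (Ke : V →ₗ[ℝ] V) (Kv N : Fin M → (V →ₗ[ℝ] V)) (Mhat : V →ₗ[ℝ] V)
    (hN : ∀ α, (LinearMap.id + (Δt / η α) • Kv α) ∘ₗ N α = LinearMap.id)
    (hM : (LinearMap.id + Ke ∘ₗ (∑ α, (Δt / η α) • N α)) ∘ₗ Mhat = LinearMap.id)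
    (R : Fin M → V)
    (ΔE : Fin M → V)
    (hΔE : ∀ α, ΔE α = -(N α (R α)) +
      (Δt / η α) • N α (Mhat (Ke (∑ β, N β (R β))))) :
    ∀ γ : Fin M,
      (Δt / η γ) • Ke (∑ α, ΔE α) +
        ((ΔE γ) + (Δt / η γ) • Kv γ (ΔE γ)) = -(R γ) := by
  intro γ
  simpa only [LinearMap.add_apply, LinearMap.id_apply, LinearMap.smul_apply] using
    LinearMap.diag_add_rankOne_block_solution Ke Mhat (fun α => LinearMap.id + (Δt / η α) • Kv α)
      N (fun α => Δt / η α) hN hM R ΔE hΔE γ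

theorem gkv_newton_system_closed_form_solution
    {V : Type*} [AddCommGroup V] [Module ℝ V] [FiniteDimensional ℝ V]
    (M : ℕ) (Δt : ℝ) (hΔt : 0 < Δt)
    (η : Fin M → ℝ) (hη : ∀ α, 0 < η α)
    (Ke : V →ₗ[ℝ] V) (Kv N : Fin M → (V →ₗ[ℝ] V)) (Mhat : V →ₗ[ℝ] V)
    (hN : ∀ α, (LinearMap.id + (Δt / η α) • Kv α) ∘ₗ N α = LinearMap.id)
    (hM : (LinearMap.id + Ke ∘ₗ (∑ α, (Δt / η α) • N α)) ∘ₗ Mhat = LinearMap.id)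
    (R : Fin M → V)
    (ΔE : Fin M → V)
    (hΔE : ∀ α, ΔE α = -(N α (R α)) +
      (Δt / η α) • N α (Mhat (Ke (∑ β, N β (R β))))) :
    ∀ γ : Fin M,
      (Δt / η γ) • Ke (∑ α, ΔE α) +
        ((ΔE γ) + (Δt / η γ) • Kv γ (ΔE γ)) = -(R γ) :=
  gkv_newton_system_closed_form_solution_general M Δt η Ke Kv N Mhat hN hM R ΔE hΔE
end
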